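/- For all a, b ∈ k^× and all n ≥ 1: if n is odd then a_n(⟨a⟩ + ⟨b⟩) = ((n+1)/2)·(⟨a⟩ + ⟨b⟩) in W, and if n is even then a_n(⟨a⟩ + ⟨b⟩) = (1 + n/2)·⟨1⟩ + (n/2)·(⟨ab⟩ + t_a + t_b) in W. -/

import Mathlib

noncomputable section

/-- The ideal `R` of relations in the group ring `ℤ[k^×]`: generated by the elements
`⟨a⟩ − ⟨ab²⟩` for `a, b ∈ k^×`, and `⟨a⟩ + ⟨b⟩ − ⟨a+b⟩ − ⟨(a+b)ab⟩` for `a, b ∈ k^×`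
with `a + b ≠ 0` (the condition `a + b ≠ 0` being encoded by the existence of a unit
`c` with value `a + b`). -/
def GWIdeal (k : Type*) [Field k] : Ideal (MonoidAlgebra ℤ kˣ) :=
  Ideal.span
    ({x | ∃ a b : kˣ, x = MonoidAlgebra.of ℤ kˣ a - MonoidAlgebra.of ℤ kˣ (a * b ^ 2)} ∪
     {x | ∃ a b c : kˣ, (c : k) = (a : k) + (b : k) ∧
        x = MonoidAlgebra.of ℤ kˣ a + MonoidAlgebra.of ℤ kˣ b
            - MonoidAlgebra.of ℤ kˣ c - MonoidAlgebra.of ℤ kˣ (c * a * b)})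

/-- The Grothendieck–Witt ring of `k`, presented (Lam) as `ℤ[k^×]/R`. -/
abbrev GW (k : Type*) [Field k] := MonoidAlgebra ℤ kˣ ⧸ GWIdeal k

/-- `⟨a⟩`: the class in `W = ℤ[k^×]/R` of the basis element of `a ∈ k^×`. -/
def gw {k : Type*} [Field k] (a : kˣ) : GW k :=
  Ideal.Quotient.mk (GWIdeal k) (MonoidAlgebra.of ℤ kˣ a)

/-- `t_a := ⟨2⟩ + ⟨a⟩ − ⟨1⟩ − ⟨2a⟩ ∈ W` (for `k` of characteristic `≠ 2`, so that
`2` is a unit of `k`). -/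
def tGW {k : Type*} [Field k] (h2 : (2 : k) ≠ 0) (a : kˣ) : GW k :=
  gw (Units.mk0 (2 : k) h2) + gw a - gw 1 - gw (Units.mk0 (2 : k) h2 * a)

end

section Helpers
variable {k : Type*} [Field k]

lemma gw_mul (a b : kˣ) : gw (a * b) = gw a * gw b := by
  unfold gw
  rw [map_mul, map_mul]

lemma gw_one : gw (1 : kˣ) = (1 : GW k) := by
  unfold gw
  rw [map_one, map_one]

lemma gw_sq (a b : kˣ) : gw (a * b ^ 2) = gw a := by
  have h : MonoidAlgebra.of ℤ kˣ a - MonoidAlgebra.of ℤ kˣ (a * b ^ 2) ∈ GWIdeal k :=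
    Ideal.subset_span (Or.inl ⟨a, b, rfl⟩)
  unfold gw
  rw [Ideal.Quotient.eq]
  simpa using (GWIdeal k).neg_mem h

lemma gw_self_mul (e : kˣ) : gw e * gw e = 1 := by
  rw [← gw_mul, show e * e = 1 * e ^ 2 by rw [one_mul, sq], gw_sq, gw_one]

lemma gw_two_rel (h2 : (2:k) ≠ 0) :
    gw (Units.mk0 (2:k) h2) + gw (Units.mk0 (2:k) h2) = (1 : GW k) + 1 := by
  have hc : ((Units.mk0 (2:k) h2 : kˣ) : k) = ((1:kˣ) : k) + ((1:kˣ) : k) := by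
    norm_num
  have h : MonoidAlgebra.of ℤ kˣ 1 + MonoidAlgebra.of ℤ kˣ 1
      - MonoidAlgebra.of ℤ kˣ (Units.mk0 (2:k) h2)
      - MonoidAlgebra.of ℤ kˣ (Units.mk0 (2:k) h2 * 1 * 1) ∈ GWIdeal k :=
    Ideal.subset_span (Or.inr ⟨1, 1, Units.mk0 (2:k) h2, hc, rfl⟩)
  have h0 := Ideal.Quotient.eq_zero_iff_mem.mpr h
  rw [map_sub, map_sub, map_add] at h0
  have h1 : gw (1:kˣ) + gw (1:kˣ) - gw (Units.mk0 (2:k) h2)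
      - gw (Units.mk0 (2:k) h2 * 1 * 1) = 0 := h0
  rw [mul_one, mul_one, gw_one] at h1
  linear_combination -h1

lemma t_two (h2 : (2:k) ≠ 0) (e : kˣ) : tGW h2 e + tGW h2 e = 0 := by
  unfold tGW
  simp only [gw_mul, gw_one]
  linear_combination (1 - gw e) * gw_two_rel h2

lemma t_t (h2 : (2:k) ≠ 0) (e f : kˣ) : tGW h2 e * tGW h2 f = 0 := by
  unfold tGW
  simp only [gw_mul, gw_one]
  linear_combination ((gw e - 1) * (gw f - 1)) * gw_self_mul (Units.mk0 (2:k) h2)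
    - ((gw e - 1) * (gw f - 1)) * gw_two_rel h2

lemma t_K (h2 : (2:k) ≠ 0) (a b : kˣ) :
    tGW h2 a + tGW h2 b + gw a * tGW h2 b + gw b * tGW h2 a = 0 := by
  unfold tGW
  simp only [gw_mul, gw_one]
  linear_combination (1 - gw a * gw b) * gw_two_rel h2

noncomputable def UU {k : Type*} [Field k] (h2 : (2:k) ≠ 0) (e : kˣ) (i : ℕ) : GW k :=
  gw (e ^ i) + (i / 2) • tGW h2 e

lemma UU_zero (h2 : (2:k) ≠ 0) (e : kˣ) : UU h2 e 0 = 1 := by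
  unfold UU; norm_num [gw_one]

lemma UU_one (h2 : (2:k) ≠ 0) (e : kˣ) : UU h2 e 1 = gw e := by
  unfold UU; norm_num

lemma UU_two (h2 : (2:k) ≠ 0) (e : kˣ) : UU h2 e 2 = 1 + tGW h2 e := by
  unfold UU
  rw [show e ^ 2 = 1 * e ^ 2 from (one_mul _).symm, gw_sq, gw_one]
  norm_num

lemma UU_three (h2 : (2:k) ≠ 0) (e : kˣ) : UU h2 e 3 = gw e + tGW h2 e := by
  unfold UU
  rw [show e ^ 3 = e * e ^ 2 from by rw [show (3:ℕ) = 2 + 1 from rfl, pow_succ, mul_comm, sq],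
    gw_sq]
  norm_num

lemma UU_per (h2 : (2:k) ≠ 0) (e : kˣ) (i : ℕ) : UU h2 e (i + 4) = UU h2 e i := by
  unfold UU
  rw [show e ^ (i+4) = e ^ i * (e ^ 2) ^ 2 from by rw [← pow_mul, ← pow_add],
      gw_sq, show (i+4)/2 = i/2 + 2 from by omega, add_smul, two_smul, t_two h2 e, add_zero]

lemma UU_per_mul (h2 : (2:k) ≠ 0) (e : kˣ) (q i : ℕ) : UU h2 e (i + 4 * q) = UU h2 e i := by
  induction q with
  | zero => norm_num
  | succ p ih => rw [show i + 4 * (p+1) = (i + 4 * p) + 4 from by ring, UU_per, ih]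

lemma UU_four (h2 : (2:k) ≠ 0) (e : kˣ) : UU h2 e 4 = 1 := by
  have h := UU_per h2 e 0
  norm_num [UU_zero] at h
  exact h

lemma UU_five (h2 : (2:k) ≠ 0) (e : kˣ) : UU h2 e 5 = gw e := by
  have h := UU_per h2 e 1
  norm_num [UU_one] at h
  exact h

lemma UU_six (h2 : (2:k) ≠ 0) (e : kˣ) : UU h2 e 6 = 1 + tGW h2 e := by
  have h := UU_per h2 e 2
  norm_num [UU_two] at h
  exact h

lemma UU_seven (h2 : (2:k) ≠ 0) (e : kˣ) : UU h2 e 7 = gw e + tGW h2 e := by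
  have h := UU_per h2 e 3
  norm_num [UU_three] at h
  exact h

lemma sum_peel {R : Type*} [CommRing R] (u v : ℕ → R) (hv : ∀ j, v (j + 4) = v j) (m : ℕ) :
    ∑ i ∈ Finset.range (m + 4 + 1), u i * v (m + 4 - i)
      = (∑ i ∈ Finset.range (m + 1), u i * v (m - i))
        + u (m + 1) * v 3 + u (m + 2) * v 2 + u (m + 3) * v 1 + u (m + 4) * v 0 := by
  have h4 : ∀ f : ℕ → R, ∑ x ∈ Finset.range 4, f x = f 0 + f 1 + f 2 + f 3 := by
    intro f
    rw [show (4:ℕ) = 0+1+1+1+1 from rfl, Finset.sum_range_succ, Finset.sum_range_succ,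
        Finset.sum_range_succ, Finset.sum_range_succ, Finset.sum_range_zero]
    norm_num
  rw [show m + 4 + 1 = (m + 1) + 4 from by omega, Finset.sum_range_add, h4]
  have hc : ∑ i ∈ Finset.range (m+1), u i * v (m + 4 - i)
      = ∑ i ∈ Finset.range (m+1), u i * v (m - i) := by
    refine Finset.sum_congr rfl fun i hi => ?_
    have hi' : i < m + 1 := Finset.mem_range.mp hi
    rw [show m + 4 - i = (m - i) + 4 from by omega, hv]
  rw [hc, show m + 4 - (m + 1 + 0) = 3 from by omega, show m + 4 - (m + 1 + 1) = 2 from by omega,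
      show m + 4 - (m + 1 + 2) = 1 from by omega, show m + 4 - (m + 1 + 3) = 0 from by omega,
      show m + 1 + 0 = m + 1 from by omega, show m + 1 + 1 = m + 2 from by omega,
      show m + 1 + 2 = m + 3 from by omega, show m + 1 + 3 = m + 4 from by omega]
  ring

end Helpers

set_option maxHeartbeats 4000000 in
/-- Lemma (value of `a_n` on binary forms): let `(A n)` be the coefficient functions
`a_n : ℤ[k^×] → W` of the power structure, characterised by `a_0 ≡ 1`, `a_n(0) = 0`
for `n ≥ 1`, additivity `a_n(q+q') = Σ_{i=0}^n a_i(q)·a_{n−i}(q')`, and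
`a_n(⟨α⟩) = ⟨αⁿ⟩ + ⌊n/2⌋·t_α` for `n ≥ 1`.  Then for all `a, b ∈ k^×` and `n ≥ 1`:
if `n` is odd, `a_n(⟨a⟩+⟨b⟩) = ((n+1)/2)·(⟨a⟩+⟨b⟩)`, and if `n` is even,
`a_n(⟨a⟩+⟨b⟩) = (1+n/2)·⟨1⟩ + (n/2)·(⟨ab⟩ + t_a + t_b)`. -/
theorem an_binary_form {k : Type*} [Field k] (h2 : (2 : k) ≠ 0)
    (A : ℕ → MonoidAlgebra ℤ kˣ → GW k)
    (hA0 : ∀ q, A 0 q = 1)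
    (hAz : ∀ n : ℕ, 1 ≤ n → A n 0 = 0)
    (hAadd : ∀ (n : ℕ) (q q' : MonoidAlgebra ℤ kˣ),
      A n (q + q') = ∑ i ∈ Finset.range (n + 1), A i q * A (n - i) q')
    (hAsingle : ∀ (α : kˣ) (n : ℕ), 1 ≤ n →
      A n (MonoidAlgebra.of ℤ kˣ α) = gw (α ^ n) + (n / 2) • tGW h2 α)
    (a b : kˣ) (n : ℕ) (hn : 1 ≤ n) :
    (Odd n → A n (MonoidAlgebra.of ℤ kˣ a + MonoidAlgebra.of ℤ kˣ b)
        = ((n + 1) / 2) • (gw a + gw b)) ∧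
    (Even n → A n (MonoidAlgebra.of ℤ kˣ a + MonoidAlgebra.of ℤ kˣ b)
        = (1 + n / 2) • gw (1 : kˣ) + (n / 2) • (gw (a * b) + tGW h2 a + tGW h2 b)) := by
  have hsplit : ∀ (c : ℕ) (x : GW k), (c + 2) • x = c • x + (x + x) := by
    intro c x
    rw [show c + 2 = c + 1 + 1 from rfl, succ_nsmul, succ_nsmul, add_assoc]
  have hU : ∀ (e : kˣ) (i : ℕ), A i (MonoidAlgebra.of ℤ kˣ e) = UU h2 e i := by
    intro e i
    cases i with
    | zero => rw [hA0, UU_zero]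
    | succ m =>
        rw [hAsingle e (m+1) (Nat.succ_le_succ (Nat.zero_le m))]
        rfl
  have hsum : ∀ n : ℕ, A n (MonoidAlgebra.of ℤ kˣ a + MonoidAlgebra.of ℤ kˣ b)
      = ∑ i ∈ Finset.range (n+1), UU h2 a i * UU h2 b (n - i) := by
    intro n
    rw [hAadd]
    exact Finset.sum_congr rfl fun i _ => by rw [hU, hU]
  have key : ∀ q : ℕ,
      (∑ i ∈ Finset.range (4*q + 1), UU h2 a i * UU h2 b (4*q - i)
        = (1 + 2*q) • (1 : GW k) + (2*q) • (gw (a*b) + tGW h2 a + tGW h2 b)) ∧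
      (∑ i ∈ Finset.range (4*q + 1 + 1), UU h2 a i * UU h2 b (4*q + 1 - i)
        = (2*q + 1) • (gw a + gw b)) ∧
      (∑ i ∈ Finset.range (4*q + 2 + 1), UU h2 a i * UU h2 b (4*q + 2 - i)
        = (2 + 2*q) • (1 : GW k) + (2*q + 1) • (gw (a*b) + tGW h2 a + tGW h2 b)) ∧
      (∑ i ∈ Finset.range (4*q + 3 + 1), UU h2 a i * UU h2 b (4*q + 3 - i)
        = (2*q + 2) • (gw a + gw b)) := by
    intro q
    induction q with
    | zero =>
        refine ⟨?_, ?_, ?_, ?_⟩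
        · rw [Finset.sum_range_succ]
          norm_num [UU_zero]
        · rw [Finset.sum_range_succ, Finset.sum_range_succ]
          norm_num [UU_zero, UU_one]
          linear_combination (0 : GW k)
        · rw [Finset.sum_range_succ, Finset.sum_range_succ, Finset.sum_range_succ]
          norm_num [UU_zero, UU_one, UU_two, gw_mul]
          linear_combination (0 : GW k)
        · rw [Finset.sum_range_succ, Finset.sum_range_succ, Finset.sum_range_succ,
              Finset.sum_range_succ]
          norm_num [UU_zero, UU_one, UU_two, UU_three]
          linear_combination t_K h2 a b
    | succ p ih =>
        obtain ⟨ih0, ih1, ih2, ih3⟩ := ih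
        refine ⟨?_, ?_, ?_, ?_⟩
        · have e1 : (1 + 2*(p+1)) • (1 : GW k) = (1 + 2*p) • (1 : GW k) + ((1 : GW k) + 1) := by
            rw [show 1 + 2*(p+1) = (1 + 2*p) + 2 from by ring]
            exact hsplit _ _
          have e2 : (2*(p+1)) • (gw (a*b) + tGW h2 a + tGW h2 b : GW k) = (2*p) • (gw (a*b) + tGW h2 a + tGW h2 b : GW k) + ((gw (a*b) + tGW h2 a + tGW h2 b : GW k) + (gw (a*b) + tGW h2 a + tGW h2 b)) := by
            rw [show 2*(p+1) = (2*p) + 2 from by ring]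
            exact hsplit _ _
          rw [show 4*(p+1) = 4*p + 4 from by ring]
          rw [sum_peel (UU h2 a) (UU h2 b) (UU_per h2 b) (4*p), ih0]
          rw [show 4*p + 1 = 1 + 4*p from by ring]
          rw [show 4*p + 2 = 2 + 4*p from by ring]
          rw [show 4*p + 3 = 3 + 4*p from by ring]
          rw [show 4*p + 4 = 4 + 4*p from by ring]
          rw [UU_per_mul h2 a p 1]
          rw [UU_per_mul h2 a p 2]
          rw [UU_per_mul h2 a p 3]
          rw [UU_per_mul h2 a p 4]
          rw [UU_one h2 a]
          rw [UU_two h2 a]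
          rw [UU_three h2 a]
          rw [UU_four h2 a]
          rw [UU_three h2 b]
          rw [UU_two h2 b]
          rw [UU_one h2 b]
          rw [UU_zero h2 b]
          rw [gw_mul a b]
          linear_combination -e1 - e2 + t_K h2 a b + t_t h2 a b - t_two h2 a - t_two h2 b
        · have e1 : (2*(p+1) + 1) • (gw a + gw b : GW k) = (2*p + 1) • (gw a + gw b : GW k) + ((gw a + gw b : GW k) + (gw a + gw b)) := by
            rw [show 2*(p+1) + 1 = (2*p + 1) + 2 from by ring]
            exact hsplit _ _
          rw [show 4*(p+1) + 1 = 4*p + 1 + 4 from by ring]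
          rw [sum_peel (UU h2 a) (UU h2 b) (UU_per h2 b) (4*p + 1), ih1]
          rw [show 4*p + 1 + 1 = 2 + 4*p from by ring]
          rw [show 4*p + 1 + 2 = 3 + 4*p from by ring]
          rw [show 4*p + 1 + 3 = 4 + 4*p from by ring]
          rw [show 4*p + 1 + 4 = 5 + 4*p from by ring]
          rw [UU_per_mul h2 a p 2]
          rw [UU_per_mul h2 a p 3]
          rw [UU_per_mul h2 a p 4]
          rw [UU_per_mul h2 a p 5]
          rw [UU_two h2 a]
          rw [UU_three h2 a]
          rw [UU_four h2 a]
          rw [UU_five h2 a]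
          rw [UU_three h2 b]
          rw [UU_two h2 b]
          rw [UU_one h2 b]
          rw [UU_zero h2 b]
          linear_combination -e1 + t_K h2 a b + 2 * t_t h2 a b
        · have e1 : (2 + 2*(p+1)) • (1 : GW k) = (2 + 2*p) • (1 : GW k) + ((1 : GW k) + 1) := by
            rw [show 2 + 2*(p+1) = (2 + 2*p) + 2 from by ring]
            exact hsplit _ _
          have e2 : (2*(p+1) + 1) • (gw (a*b) + tGW h2 a + tGW h2 b : GW k) = (2*p + 1) • (gw (a*b) + tGW h2 a + tGW h2 b : GW k) + ((gw (a*b) + tGW h2 a + tGW h2 b : GW k) + (gw (a*b) + tGW h2 a + tGW h2 b)) := by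
            rw [show 2*(p+1) + 1 = (2*p + 1) + 2 from by ring]
            exact hsplit _ _
          rw [show 4*(p+1) + 2 = 4*p + 2 + 4 from by ring]
          rw [sum_peel (UU h2 a) (UU h2 b) (UU_per h2 b) (4*p + 2), ih2]
          rw [show 4*p + 2 + 1 = 3 + 4*p from by ring]
          rw [show 4*p + 2 + 2 = 4 + 4*p from by ring]
          rw [show 4*p + 2 + 3 = 5 + 4*p from by ring]
          rw [show 4*p + 2 + 4 = 6 + 4*p from by ring]
          rw [UU_per_mul h2 a p 3]
          rw [UU_per_mul h2 a p 4]
          rw [UU_per_mul h2 a p 5]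
          rw [UU_per_mul h2 a p 6]
          rw [UU_three h2 a]
          rw [UU_four h2 a]
          rw [UU_five h2 a]
          rw [UU_six h2 a]
          rw [UU_three h2 b]
          rw [UU_two h2 b]
          rw [UU_one h2 b]
          rw [UU_zero h2 b]
          rw [gw_mul a b]
          linear_combination -e1 - e2 + t_K h2 a b + t_t h2 a b - t_two h2 a - t_two h2 b
        · have e1 : (2*(p+1) + 2) • (gw a + gw b : GW k) = (2*p + 2) • (gw a + gw b : GW k) + ((gw a + gw b : GW k) + (gw a + gw b)) := by
            rw [show 2*(p+1) + 2 = (2*p + 2) + 2 from by ring]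
            exact hsplit _ _
          rw [show 4*(p+1) + 3 = 4*p + 3 + 4 from by ring]
          rw [sum_peel (UU h2 a) (UU h2 b) (UU_per h2 b) (4*p + 3), ih3]
          rw [show 4*p + 3 + 1 = 4 + 4*p from by ring]
          rw [show 4*p + 3 + 2 = 5 + 4*p from by ring]
          rw [show 4*p + 3 + 3 = 6 + 4*p from by ring]
          rw [show 4*p + 3 + 4 = 7 + 4*p from by ring]
          rw [UU_per_mul h2 a p 4]
          rw [UU_per_mul h2 a p 5]
          rw [UU_per_mul h2 a p 6]
          rw [UU_per_mul h2 a p 7]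
          rw [UU_four h2 a]
          rw [UU_five h2 a]
          rw [UU_six h2 a]
          rw [UU_seven h2 a]
          rw [UU_three h2 b]
          rw [UU_two h2 b]
          rw [UU_one h2 b]
          rw [UU_zero h2 b]
          linear_combination -e1 + t_K h2 a b
  obtain ⟨q, r, hr4, rfl⟩ : ∃ q r : ℕ, r < 4 ∧ n = 4*q + r := ⟨n/4, n%4, by omega, by omega⟩
  constructor
  · intro hodd
    rw [Nat.odd_iff] at hodd
    interval_cases r
    · omega
    · rw [hsum, show (4*q+1+1)/2 = 2*q+1 from by omega]
      exact (key q).2.1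
    · omega
    · rw [hsum, show (4*q+3+1)/2 = 2*q+2 from by omega]
      exact (key q).2.2.2
  · intro heven
    rw [Nat.even_iff] at heven
    interval_cases r
    · rw [hsum, gw_one]
      simp only [Nat.add_zero]
      rw [show (4*q)/2 = 2*q from by omega]
      exact (key q).1
    · omega
    · rw [hsum, gw_one, show 1 + (4*q+2)/2 = 2 + 2*q from by omega,
          show (4*q+2)/2 = 2*q+1 from by omega]
      exact (key q).2.2.1
    · omega
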